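/- Let p be a prime number, let (ℚ/ℤ)' be the subgroup of ℚ/ℤ of elements of order prime to p, and let Y be a finitely generated free abelian group. Then for every additive group homomorphism f : (ℚ/ℤ)' ⊗_ℤ Y → (ℚ/ℤ)' and every additive group automorphism κ of (ℚ/ℤ)', one has κ ∘ f ∘ (κ⁻¹ ⊗ id_Y) = f. -/

import Mathlib

open scoped TensorProduct

/-- The subgroup `(ℚ/ℤ)'` of `ℚ/ℤ` consisting of the elements whose order is not
divisible by the prime `p`. -/
def primeToPart (p : ℕ) (hp : p.Prime) : AddSubgroup (AddCircle (1 : ℚ)) where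
  carrier := {x | ¬ (p ∣ addOrderOf x)}
  zero_mem' := by
    simp only [Set.mem_setOf_eq, addOrderOf_zero, Nat.dvd_one]
    exact hp.ne_one
  add_mem' := by
    intro a b ha hb hdvd
    have h1 : addOrderOf (a + b) ∣ addOrderOf a * addOrderOf b :=
      (AddCommute.all a b).addOrderOf_add_dvd_mul_addOrderOf
    rcases (Nat.Prime.dvd_mul hp).1 (hdvd.trans h1) with h | h
    · exact ha h
    · exact hb h
  neg_mem' := by
    intro a ha
    simpa only [Set.mem_setOf_eq, addOrderOf_neg] using ha

/-!
The `n`-torsion of `ℚ/ℤ` has at most `n` elements, so it equals the cyclic group generated by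
any element `x` of order `n`. Hence, in every subgroup of `ℚ/ℤ`, an endomorphism maps `x` to an
integer multiple of `x`, and any two endomorphisms commute. Applying this to `κ` and to
`f (· ⊗ y)` gives the claim on pure tensors.
-/

open AddSubgroup

theorem AddMonoidHom.apply_comm_of_torsion_subset_zmultiples {G : Type*} [AddCommGroup G]
    (φ ψ : G →+ G) {x : G} (hx : ∀ z : G, addOrderOf x • z = 0 → z ∈ zmultiples x) :
    φ (ψ x) = ψ (φ x) := by
  have torsion (χ : G →+ G) : addOrderOf x • χ x = 0 := by
    rw [← map_nsmul, addOrderOf_nsmul_eq_zero, map_zero]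
  obtain ⟨a, ha⟩ := mem_zmultiples_iff.mp (hx _ (torsion φ))
  obtain ⟨b, hb⟩ := mem_zmultiples_iff.mp (hx _ (torsion ψ))
  rw [← ha, ← hb, map_zsmul, map_zsmul, ← ha, ← hb, smul_comm]

theorem AddSubgroup.mem_zmultiples_of_nsmul_addOrderOf_eq_zero {G : Type*} [AddGroup G]
    {H : AddSubgroup G} {x z : H}
    (hx : ∀ w : G, addOrderOf (x : G) • w = 0 → w ∈ zmultiples (x : G))
    (hz : addOrderOf x • z = 0) : z ∈ zmultiples x := by
  obtain ⟨k, hk⟩ := mem_zmultiples_iff.mp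
    (hx z (by rw [addOrderOf_coe, ← coe_nsmul, hz, coe_zero]))
  exact mem_zmultiples_iff.mpr ⟨k, Subtype.ext (by rw [coe_zsmul, hk])⟩

namespace AddCircle

variable {𝕜 : Type*} [Field 𝕜] [LinearOrder 𝕜] [IsStrictOrderedRing 𝕜] {p : 𝕜}

theorem nsmul_addOrderOf_eq_zero_iff_mem_zmultiples {u : AddCircle p} (hu : IsOfFinAddOrder u)
    (z : AddCircle p) : addOrderOf u • z = 0 ↔ z ∈ zmultiples u := by
  set T : Set (AddCircle p) := {z | addOrderOf u • z = 0}
  have hsub : (zmultiples u : Set (AddCircle p)) ⊆ T := by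
    rintro _ ⟨k, rfl⟩
    simp [T, smul_comm _ k u]
  have hT : T.Finite := finite_torsion p hu.addOrderOf_pos
  have hcard : T.encard ≤ (zmultiples u : Set (AddCircle p)).encard := by
    rw [← (hT.subset hsub).cast_ncard_eq, ← Nat.card_coe_set_eq, SetLike.coe_sort_coe,
      Nat.card_zmultiples]
    exact card_torsion_le_of_isSMulRegular p _ hu.addOrderOf_pos.ne'
      (.of_right_eq_zero_of_smul fun _ ↦ by simp [hu.addOrderOf_pos.ne'])
  change z ∈ T ↔ _
  rw [← SetLike.mem_coe, ← (hT.subset hsub).eq_of_subset_of_encard_le hsub hcard]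

theorem isOfFinAddOrder_rat (u : AddCircle (1 : ℚ)) : IsOfFinAddOrder u := by
  induction u using QuotientAddGroup.induction_on with
  | H q => exact isOfFinAddOrder_iff_exists_rat_eq_div.mpr ⟨q, by simp⟩

theorem addMonoidHom_apply_comm_of_rat (H : AddSubgroup (AddCircle (1 : ℚ)))
    (φ ψ : H →+ H) (x : H) : φ (ψ x) = ψ (φ x) :=
  φ.apply_comm_of_torsion_subset_zmultiples ψ fun _ hz ↦
    mem_zmultiples_of_nsmul_addOrderOf_eq_zero
      (fun w ↦ (nsmul_addOrderOf_eq_zero_iff_mem_zmultiples (isOfFinAddOrder_rat _) w).mp) hz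

end AddCircle

theorem stmt_11_general (p : ℕ) (hp : p.Prime)
    {Y : Type} [AddCommGroup Y]
    (f : (primeToPart p hp) ⊗[ℤ] Y →+ primeToPart p hp)
    (κ : primeToPart p hp ≃+ primeToPart p hp)
    (t : (primeToPart p hp) ⊗[ℤ] Y) :
    κ (f (TensorProduct.map κ.symm.toAddMonoidHom.toIntLinearMap
        (LinearMap.id : Y →ₗ[ℤ] Y) t)) = f t := by
  induction t using TensorProduct.induction_on with
  | zero => simp
  | tmul x y =>
    have comm := AddCircle.addMonoidHom_apply_comm_of_rat _ κ.toAddMonoidHom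
      (f.comp ((TensorProduct.mk ℤ _ Y).flip y).toAddMonoidHom) (κ.symm x)
    simpa using comm
  | add a b ha hb => simp only [map_add, ha, hb]

/-- For a prime `p`, every homomorphism `f : (ℚ/ℤ)' ⊗ Y → (ℚ/ℤ)'`
(with `Y` finitely generated free abelian) satisfies `κ ∘ f ∘ (κ⁻¹ ⊗ id) = f`
for every automorphism `κ` of `(ℚ/ℤ)'`. -/
theorem stmt_11 (p : ℕ) (hp : p.Prime)
    {Y : Type} [AddCommGroup Y] [Module.Free ℤ Y] [Module.Finite ℤ Y]
    (f : (primeToPart p hp) ⊗[ℤ] Y →+ primeToPart p hp)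
    (κ : primeToPart p hp ≃+ primeToPart p hp)
    (t : (primeToPart p hp) ⊗[ℤ] Y) :
    κ (f (TensorProduct.map κ.symm.toAddMonoidHom.toIntLinearMap
        (LinearMap.id : Y →ₗ[ℤ] Y) t)) = f t :=
  stmt_11_general p hp f κ t
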